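/- arXiv:2302.11990 — 2 statements merged into one kernel-verified Lean document; each statement's English description precedes it below -/
import Mathlib

section
/- Cusp condition implies Property (A): if Ω = {(x̄, x_N) ∈ ℝ^N : x_N < φ(x̄)} where φ: ℝ^{N−1} → ℝ satisfies |φ(x̄) − φ(ȳ)| ≤ M |x̄ − ȳ|^γ for all x̄, ȳ, then there exists c > 0 depending only on N, γ, M such that |B_γ(x,r) ∩ Ω| ≥ c r^{N_γ} for all x ∈ Ω̄ and all r > 0. -/
open MeasureTheory Set ENNReal

noncomputable section

abbrev Pt (n : ℕ) := EuclideanSpace ℝ (Fin n) × ℝ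

def deltaG {n : ℕ} (γ : ℝ) (x y : Pt n) : ℝ :=
  max (‖x.1 - y.1‖ ^ γ) |x.2 - y.2|

def ballG {n : ℕ} (γ : ℝ) (x : Pt n) (r : ℝ) : Set (Pt n) :=
  {y | deltaG γ x y < r}

/-!
Every point `x` of the closed subgraph `Ω̄` is the vertex of the downward cusp
`C_γ(x, M) = {y | y_N < x_N - M |ȳ - x̄|^γ}`, which lies in `Ω` by the Hölder bound on `φ`.
Taking `ρ = (r / 2(M+1))^(1/γ)`, the cylinder `B(x̄, ρ) × (x_N - r, x_N - M ρ^γ)` lies in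
`C_γ(x, M) ∩ B_γ(x, r)` and has volume at least `ρ^{N-1} |B_1| r / 2`, a fixed multiple of
`r^{(N-1)/γ + 1} = r^{N_γ}`.
-/

theorem HolderWith.of_dist_le {X Y : Type*} [PseudoMetricSpace X] [PseudoMetricSpace Y]
    {C r : NNReal} {f : X → Y} (h : ∀ x y, dist (f x) (f y) ≤ C * dist x y ^ (r : ℝ)) :
    HolderWith C r f := by
  intro x y
  rw [edist_dist, edist_dist, ENNReal.ofReal_rpow_of_nonneg dist_nonneg r.coe_nonneg,
    ← ENNReal.ofReal_coe_nnreal, ← ENNReal.ofReal_mul C.coe_nonneg]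
  exact ENNReal.ofReal_le_ofReal (h x y)

def cusp {n : ℕ} (γ M : ℝ) (x : Pt n) : Set (Pt n) :=
  {y | y.2 < x.2 - M * ‖y.1 - x.1‖ ^ γ}

section Cusp

variable {n : ℕ} {γ M : ℝ} {φ : EuclideanSpace ℝ (Fin n) → ℝ}

theorem cusp_subset_subgraph (hφ : ∀ u v, |φ u - φ v| ≤ M * ‖u - v‖ ^ γ) {x : Pt n}
    (hx : x.2 ≤ φ x.1) : cusp γ M x ⊆ {w | w.2 < φ w.1} := by
  intro y hy
  have hφxy := (le_abs_self _).trans (hφ x.1 y.1)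
  rw [cusp, mem_ofPred_eq, ← norm_neg, neg_sub] at hy
  exact hy.trans_le (by linarith)

theorem ball_prod_Ioo_subset_cusp_inter_ballG (hγ : 0 < γ) (hM : 0 ≤ M) (x : Pt n)
    {ρ r : ℝ} (hρr : ρ ^ γ ≤ r) :
    Metric.ball x.1 ρ ×ˢ Ioo (x.2 - r) (x.2 - M * ρ ^ γ) ⊆ cusp γ M x ∩ ballG γ x r := by
  rintro ⟨y₁, y₂⟩ ⟨hy₁, hy₂_gt, hy₂_lt⟩
  dsimp only at hy₁ hy₂_gt hy₂_lt
  have hdist : ‖y₁ - x.1‖ ^ γ < ρ ^ γ :=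
    Real.rpow_lt_rpow (norm_nonneg _) (mem_ball_iff_norm.mp hy₁) hγ
  have hMρ : M * ‖y₁ - x.1‖ ^ γ ≤ M * ρ ^ γ := mul_le_mul_of_nonneg_left hdist.le hM
  have hMρ₀ : 0 ≤ M * ‖y₁ - x.1‖ ^ γ := by positivity
  refine ⟨show y₂ < x.2 - M * ‖y₁ - x.1‖ ^ γ by linarith,
    show deltaG γ x (y₁, y₂) < r from max_lt ?_ ?_⟩
  · rw [norm_sub_rev]
    exact hdist.trans_le hρr
  · exact abs_lt.mpr ⟨by linarith, by linarith⟩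

theorem volume_ball_prod_Ioo {ρ : ℝ} (hρ : 0 < ρ) (a : EuclideanSpace ℝ (Fin n))
    (s t : ℝ) :
    volume (Metric.ball a ρ ×ˢ Ioo s t : Set (Pt n)) =
      ENNReal.ofReal (ρ ^ n) * volume (Metric.ball (0 : EuclideanSpace ℝ (Fin n)) 1) *
        ENNReal.ofReal (t - s) := by
  rw [Measure.volume_eq_prod, Measure.prod_prod, Real.volume_Ioo,
    Measure.addHaar_ball_of_pos _ _ hρ, finrank_euclideanSpace, Fintype.card_fin]

theorem exists_volume_cusp_inter_ballG_ge (n : ℕ) (hγ : 0 < γ) (hM : 0 ≤ M) :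
    ∃ c : ℝ, 0 < c ∧ ∀ (x : Pt n) (r : ℝ), 0 < r →
      ENNReal.ofReal (c * r ^ ((n : ℝ) / γ + 1)) ≤ volume (cusp γ M x ∩ ballG γ x r) := by
  set K : ℝ := 2 * (M + 1)
  have hK : 0 < K := by positivity
  set B := volume (Metric.ball (0 : EuclideanSpace ℝ (Fin n)) 1)
  have hB : 0 < B.toReal :=
    ENNReal.toReal_pos (Metric.measure_ball_pos _ _ one_pos).ne' measure_ball_lt_top.ne
  refine ⟨K ^ (-((n : ℝ) / γ)) * B.toReal / 2, by positivity, fun x r hr => ?_⟩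
  set ρ : ℝ := (r / K) ^ γ⁻¹
  have hρ : 0 < ρ := by positivity
  have hργ : ρ ^ γ = r / K := by
    rw [← Real.rpow_mul (by positivity), inv_mul_cancel₀ hγ.ne', Real.rpow_one]
  have hρn : ρ ^ n = K ^ (-((n : ℝ) / γ)) * r ^ ((n : ℝ) / γ) := by
    rw [← Real.rpow_natCast, ← Real.rpow_mul (by positivity), Real.div_rpow hr.le hK.le,
      Real.rpow_neg hK.le, div_eq_inv_mul, inv_mul_eq_div, div_eq_mul_inv]
    ring_nf
  have hMρ : M * ρ ^ γ ≤ r / 2 := by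
    rw [hργ, mul_div_assoc', div_le_div_iff₀ hK two_pos]
    nlinarith
  have hρr : ρ ^ γ ≤ r := by
    rw [hργ, div_le_iff₀ hK]
    nlinarith
  calc ENNReal.ofReal (K ^ (-((n : ℝ) / γ)) * B.toReal / 2 * r ^ ((n : ℝ) / γ + 1))
      = ENNReal.ofReal (ρ ^ n) * ENNReal.ofReal B.toReal * ENNReal.ofReal (r / 2) := by
        rw [← ENNReal.ofReal_mul (by positivity), ← ENNReal.ofReal_mul (by positivity), hρn,
          Real.rpow_add_one hr.ne']
        ring_nf
    _ ≤ ENNReal.ofReal (ρ ^ n) * B * ENNReal.ofReal (x.2 - M * ρ ^ γ - (x.2 - r)) := by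
        gcongr
        · exact ENNReal.ofReal_toReal_le
        · linarith
    _ = volume (Metric.ball x.1 ρ ×ˢ Ioo (x.2 - r) (x.2 - M * ρ ^ γ) : Set (Pt n)) :=
        (volume_ball_prod_Ioo hρ _ _ _).symm
    _ ≤ volume (cusp γ M x ∩ ballG γ x r) :=
        measure_mono (ball_prod_Ioo_subset_cusp_inter_ballG hγ hM x hρr)

end Cusp

theorem stmt10_general (n : ℕ) (γ M : ℝ) (hγ : γ ∈ Set.Ioc (0:ℝ) 1) (hM : 0 ≤ M)
    (φ : EuclideanSpace ℝ (Fin n) → ℝ)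
    (hφ : ∀ u v : EuclideanSpace ℝ (Fin n), |φ u - φ v| ≤ M * ‖u - v‖ ^ γ) :
    ∃ c : ℝ, 0 < c ∧
      ∀ x ∈ closure {w : Pt n | w.2 < φ w.1}, ∀ r : ℝ, 0 < r →
        ENNReal.ofReal (c * r ^ ((n : ℝ) / γ + 1)) ≤
          volume (ballG γ x r ∩ {w : Pt n | w.2 < φ w.1}) := by
  have hφ_holder : HolderWith ⟨M, hM⟩ ⟨γ, hγ.1.le⟩ φ :=
    .of_dist_le fun u v => by rw [Real.dist_eq, dist_eq_norm]; exact hφ u v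
  have hφ_cont : Continuous φ := hφ_holder.continuous hγ.1
  obtain ⟨c, hc, hvol⟩ := exists_volume_cusp_inter_ballG_ge (M := M) n hγ.1 hM
  refine ⟨c, hc, fun x hx r hr => (hvol x r hr).trans (measure_mono ?_)⟩
  have hx_le : x.2 ≤ φ x.1 :=
    closure_lt_subset_le continuous_snd (hφ_cont.comp continuous_fst) hx
  exact fun y hy => ⟨hy.2, cusp_subset_subgraph hφ hx_le hy.1⟩

/-- Cusp condition implies Property (A): if `Ω = {x_N < φ(x̄)}` with `φ` γ-Hölder of
constant `M`, then there is `c > 0` depending only on `N, γ, M` with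
`|B_γ(x,r) ∩ Ω| ≥ c r^{N_γ}` for all `x ∈ Ω̄` and `r > 0`. -/
theorem stmt10 (n : ℕ) (hn : 1 ≤ n) (γ M : ℝ) (hγ : γ ∈ Set.Ioc (0:ℝ) 1) (hM : 0 ≤ M)
    (φ : EuclideanSpace ℝ (Fin n) → ℝ)
    (hφ : ∀ u v : EuclideanSpace ℝ (Fin n), |φ u - φ v| ≤ M * ‖u - v‖ ^ γ) :
    ∃ c : ℝ, 0 < c ∧
      ∀ x ∈ closure {w : Pt n | w.2 < φ w.1}, ∀ r : ℝ, 0 < r →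
        ENNReal.ofReal (c * r ^ ((n : ℝ) / γ + 1)) ≤
          volume (ballG γ x r ∩ {w : Pt n | w.2 < φ w.1}) :=
  stmt10_general n γ M hγ hM φ hφ
end
end

section
/- Hölder implied by Campanato (supercritical statement instance): let Ω ⊂ ℝ² be Ω = {(x₁,x₂) : 0 < x₂ < 1 − |x₁|^γ} with γ ∈ (0,1), let 1 < λ ≤ 1 + 1/(γ+1), α = (1 + 1/γ)(λ−1), and f(x) = sign(x₁)|x₁|^{γα}. Then f ∉ L^λ_{1,1}(Ω) (classical Campanato with Euclidean metric): for squares Q_r = (−r,r)×(0,2r) ⊂ Ω, f_{Q_r} = 0 and |Q_r|^{−λ} ∫_{Q_r} |f| = C(λ,γ) r^{(γ−1)(λ−1)} → ∞ as r → 0. -/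
/-!
On a square `Q_r = (-r,r) × (0,2r)` the function `sign(x₁)|x₁|^p` is odd in `x₁`, so its mean
vanishes and the Campanato oscillation of `f` over `Q_r` is just
`∫_{Q_r} |x₁|^p = 4r^{p+2}/(p+1)`. With `p = γα = (γ+1)(λ-1)` and `|Q_r| = 4r²` the normalised
oscillation is `4^{1-λ}/(p+1) · r^{p+2-2λ} = 4^{1-λ}/(p+1) · r^{(γ-1)(λ-1)}`, a negative power
of `r` because `γ < 1 < λ`.
-/

open MeasureTheory Set Filter

noncomputable section

/-- The squares `Q_r = (-r,r) × (0,2r)`. -/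
def Qsq (r : ℝ) : Set (ℝ × ℝ) := Set.Ioo (-r) r ×ˢ Set.Ioo (0 : ℝ) (2 * r)

namespace intervalIntegral

variable {E : Type*} [NormedAddCommGroup E] [NormedSpace ℝ E] {g : ℝ → E}

theorem integral_neg_self_eq_zero_of_odd (hg : g.Odd) (r : ℝ) : ∫ x in -r..r, g x = 0 := by
  have h : -∫ x in -r..r, g x = ∫ x in -r..r, g x := by
    simpa [hg _] using integral_comp_neg (a := -r) (b := r) g
  have h2 : (2 : ℝ) • ∫ x in -r..r, g x = 0 := by
    rw [two_smul]
    nth_rw 1 [← h]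
    exact neg_add_cancel _
  exact (smul_eq_zero.mp h2).resolve_left two_ne_zero

theorem integral_neg_self_eq_two_smul_of_even (hg : g.Even) (hcont : Continuous g) (r : ℝ) :
    ∫ x in -r..r, g x = (2 : ℝ) • ∫ x in 0..r, g x := by
  have hneg : ∫ x in -r..0, g x = ∫ x in 0..r, g x := by
    simpa [hg _] using (integral_comp_neg (a := 0) (b := r) g).symm
  rw [← integral_add_adjacent_intervals (hcont.intervalIntegrable _ 0)
    (hcont.intervalIntegrable 0 _), hneg, two_smul]

end intervalIntegral

theorem integral_abs_rpow_neg_self {p : ℝ} (hp : 0 ≤ p) {r : ℝ} (hr : 0 ≤ r) :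
    ∫ x in -r..r, |x| ^ p = 2 * (r ^ (p + 1) / (p + 1)) := by
  have heven : (fun x : ℝ => |x| ^ p).Even := fun x => by simp only [abs_neg]
  have habs : ∫ x in (0 : ℝ)..r, |x| ^ p = ∫ x in (0 : ℝ)..r, x ^ p :=
    intervalIntegral.integral_congr fun x hx => by
      rw [uIcc_of_le hr] at hx
      simp only [abs_of_nonneg hx.1]
  rw [intervalIntegral.integral_neg_self_eq_two_smul_of_even heven
    (continuous_abs.rpow_const fun _ => Or.inr hp), habs,
    integral_rpow (Or.inl (by linarith)), Real.zero_rpow (by linarith), smul_eq_mul, sub_zero]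

theorem setIntegral_Qsq_comp_fst {r : ℝ} (hr : 0 ≤ r) (g : ℝ → ℝ) :
    ∫ x in Qsq r, g x.1 = 2 * r * ∫ a in -r..r, g a := by
  rw [Qsq, Measure.volume_eq_prod, ← Measure.prod_restrict, integral_fun_fst,
    measureReal_restrict_apply_univ, Real.volume_real_Ioo_of_le (by linarith),
    intervalIntegral.integral_of_le (by linarith), integral_Ioc_eq_integral_Ioo, smul_eq_mul]
  ring

theorem volume_Qsq_toReal {r : ℝ} (hr : 0 ≤ r) : (volume (Qsq r)).toReal = 4 * r ^ 2 := by
  rw [← measureReal_def, Qsq, Measure.volume_eq_prod, measureReal_prod_prod,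
    Real.volume_real_Ioo_of_le (by linarith), Real.volume_real_Ioo_of_le (by linarith)]
  ring

theorem odd_sign_mul_abs_rpow (p : ℝ) : (fun x : ℝ => Real.sign x * |x| ^ p).Odd := fun x => by
  simp only [Real.sign_neg, abs_neg, neg_mul]

theorem abs_sign_mul_abs_rpow {p : ℝ} (hp : p ≠ 0) (x : ℝ) :
    |Real.sign x * |x| ^ p| = |x| ^ p := by
  rcases eq_or_ne x 0 with rfl | hx
  · simp [Real.zero_rpow hp]
  · rw [abs_mul, abs_of_nonneg (Real.rpow_nonneg (abs_nonneg x) p)]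
    rcases Real.sign_apply_eq_of_ne_zero x hx with h | h <;> simp [h]

theorem volume_Qsq_rpow_mul_setIntegral_abs_rpow {p : ℝ} (hp : 0 ≤ p) (lam : ℝ) {r : ℝ}
    (hr : 0 < r) :
    (volume (Qsq r)).toReal ^ (-lam) * ∫ x in Qsq r, |x.1| ^ p =
      4 ^ (1 - lam) / (p + 1) * r ^ (p + 2 - 2 * lam) := by
  have h4 : (4 : ℝ) ^ (1 - lam) = 4 * 4 ^ (-lam) := by
    rw [sub_eq_add_neg, Real.rpow_add (by norm_num), Real.rpow_one]
  have hr' : r ^ (p + 2 - 2 * lam) = (r ^ 2) ^ (-lam) * r ^ (p + 1) * r := by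
    rw [← Real.rpow_natCast, ← Real.rpow_mul hr.le, ← Real.rpow_add hr,
      ← Real.rpow_add_one hr.ne']
    push_cast
    ring_nf
  rw [volume_Qsq_toReal hr.le, setIntegral_Qsq_comp_fst hr.le (fun a => |a| ^ p),
    integral_abs_rpow_neg_self hp hr.le, Real.mul_rpow (by norm_num) (by positivity), h4, hr']
  ring

/-- Failure of the classical (Euclidean) Campanato embedding on the cusp domain
`Ω = {0 < x₂ < 1 - |x₁|^γ}`: for `γ ∈ (0,1)`, `1 < λ ≤ 1 + 1/(γ+1)`,
`α = (1 + 1/γ)(λ-1)` and `f(x) = sign(x₁)|x₁|^{γα}`, the means of `f` over the squares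
`Q_r = (-r,r) × (0,2r) ⊆ Ω` vanish, while
`|Q_r|^{-λ} ∫_{Q_r} |f| = C(λ,γ) r^{(γ-1)(λ-1)} → ∞` as `r → 0⁺`; hence
`f ∉ L^λ_{1,1}(Ω)`. -/
theorem stmt17 (γ lam : ℝ) (hγ : γ ∈ Set.Ioo (0:ℝ) 1)
    (hlam : lam ∈ Set.Ioc (1:ℝ) (1 + 1 / (γ + 1)))
    (f : ℝ × ℝ → ℝ)
    (hf : f = fun x => Real.sign x.1 * |x.1| ^ (γ * ((1 + 1 / γ) * (lam - 1)))) :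
    (∀ r : ℝ, 0 < r → Qsq r ⊆ {x : ℝ × ℝ | 0 < x.2 ∧ x.2 < 1 - |x.1| ^ γ} →
      (⨍ x in Qsq r, f x = 0) ∧
      (volume (Qsq r)).toReal ^ (-lam) * ∫ x in Qsq r, |f x| =
        (4 ^ (1 - lam) / ((γ + 1) * (lam - 1) + 1)) * r ^ ((γ - 1) * (lam - 1))) ∧
    Tendsto (fun r : ℝ => (volume (Qsq r)).toReal ^ (-lam) * ∫ x in Qsq r, |f x|)
      (nhdsWithin 0 (Set.Ioi 0)) atTop := by
  obtain ⟨hγ0, hγ1⟩ := hγ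
  have hlam1 : 1 < lam := hlam.1
  set p := (γ + 1) * (lam - 1) with hp_def
  have hp : 0 < p := by positivity
  have hfp : f = fun x => Real.sign x.1 * |x.1| ^ p := by
    rw [hf, show γ * ((1 + 1 / γ) * (lam - 1)) = p by rw [hp_def]; field_simp]
  have hratio : ∀ r > 0, (volume (Qsq r)).toReal ^ (-lam) * ∫ x in Qsq r, |f x| =
      4 ^ (1 - lam) / (p + 1) * r ^ ((γ - 1) * (lam - 1)) := fun r hr => by
    simp only [hfp, abs_sign_mul_abs_rpow hp.ne']
    rw [show (γ - 1) * (lam - 1) = p + 2 - 2 * lam by rw [hp_def]; ring]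
    exact volume_Qsq_rpow_mul_setIntegral_abs_rpow hp.le lam hr
  refine ⟨fun r hr _ => ⟨?_, hratio r hr⟩, ?_⟩
  · rw [setAverage_eq, hfp, setIntegral_Qsq_comp_fst hr.le (fun a => Real.sign a * |a| ^ p),
      intervalIntegral.integral_neg_self_eq_zero_of_odd (odd_sign_mul_abs_rpow p), mul_zero,
      smul_zero]
  · have hexp : (γ - 1) * (lam - 1) < 0 := mul_neg_of_neg_of_pos (by linarith) (by linarith)
    refine ((tendsto_rpow_neg_nhdsGT_zero hexp).const_mul_atTop
      (by positivity : (0 : ℝ) < 4 ^ (1 - lam) / (p + 1))).congr' ?_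
    filter_upwards [self_mem_nhdsWithin] with r hr
    exact (hratio r hr).symm
end
end
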